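/- Let G, H₁, …, Hₙ be mutually independent random variables, each with the exponential distribution of rate 1, and let c₁, …, cₙ ≥ 0 be real constants. Then P( G ≥ ∑_{i=1}^{n} cᵢ·Hᵢ ) = ∏_{i=1}^{n} 1/(1 + cᵢ). -/

import Mathlib

open MeasureTheory ProbabilityTheory Set
open scoped ENNReal

lemma surv_Iio_zero {μ : Measure ℝ} [IsProbabilityMeasure μ]
    (h : ∀ t : ℝ, 0 ≤ t → μ (Ici t) = ENNReal.ofReal (Real.exp (-t))) :
    μ (Iio 0) = 0 := by
  have h0 : μ (Ici (0:ℝ)) = 1 := by simpa using h 0 le_rfl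
  have := measure_compl (measurableSet_Ici (a := (0:ℝ))) (measure_ne_top μ _)
  rw [h0, measure_univ] at this
  simpa [compl_Ici] using this

lemma surv_Iio {μ : Measure ℝ} [IsProbabilityMeasure μ]
    (h : ∀ t : ℝ, 0 ≤ t → μ (Ici t) = ENNReal.ofReal (Real.exp (-t))) (s : ℝ) :
    μ (Iio s) = ENNReal.ofReal (1 - Real.exp (-s)) := by
  rcases le_or_gt s 0 with hs | hs
  · have h1 : μ (Iio s) = 0 :=
      le_antisymm (le_trans (measure_mono (Iio_subset_Iio hs)) (surv_Iio_zero h).le) zero_le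
    rw [h1]
    symm
    rw [ENNReal.ofReal_eq_zero]
    have : (1:ℝ) ≤ Real.exp (-s) := Real.one_le_exp (by linarith)
    linarith
  · have hIio : Iio s = (Ici s)ᶜ := compl_Ici.symm
    rw [hIio, measure_compl measurableSet_Ici (measure_ne_top μ _), h s hs.le, measure_univ,
      ← ENNReal.ofReal_one, ← ENNReal.ofReal_sub _ (Real.exp_pos _).le]

lemma surv_lintegral_exp {μ : Measure ℝ} [IsProbabilityMeasure μ]
    (h : ∀ t : ℝ, 0 ≤ t → μ (Ici t) = ENNReal.ofReal (Real.exp (-t)))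
    {c : ℝ} (hc : 0 ≤ c) :
    ∫⁻ x, ENNReal.ofReal (Real.exp (-(c * x))) ∂μ = ENNReal.ofReal (1 / (1 + c)) := by
  rcases hc.eq_or_lt with rfl | hc
  · simp [lintegral_const]
  -- c > 0
  have key := lintegral_eq_lintegral_meas_lt μ
    (f := fun x => Real.exp (-(c * x)))
    (Filter.Eventually.of_forall fun x => (Real.exp_pos _).le)
    ((measurable_const.mul measurable_id).neg.exp.aemeasurable)
  rw [key]
  have hset : ∀ t : ℝ, 0 < t →
      μ {a : ℝ | t < Real.exp (-(c * a))} = ENNReal.ofReal (1 - t ^ (1/c)) := by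
    intro t ht
    have hseteq : {a : ℝ | t < Real.exp (-(c * a))} = Iio (-(Real.log t) / c) := by
      ext a
      simp only [mem_setOf_eq, mem_Iio]
      rw [← Real.log_lt_iff_lt_exp ht, lt_div_iff₀ hc]  -- ?
      constructor
      · intro h1; nlinarith
      · intro h1; nlinarith
    rw [hseteq, surv_Iio h]
    congr 1
    rw [neg_div, neg_neg, Real.rpow_def_of_pos ht, mul_one_div]
  -- replace integrand on Ioi 0
  rw [setLIntegral_congr_fun (measurableSet_Ioi)
    (fun t (ht : t ∈ Ioi 0) => hset t ht)]
  -- split Ioi 0 = Ioo 0 1 ∪ Ici 1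
  have hunion : Ioi (0:ℝ) = Ioo 0 1 ∪ Ici 1 := by
    ext x; simp only [mem_Ioi, mem_union, mem_Ioo, mem_Ici]
    constructor
    · intro hx; rcases lt_or_ge x 1 with h1 | h1
      · exact Or.inl ⟨hx, h1⟩
      · exact Or.inr h1
    · rintro (⟨h1, _⟩ | h1) <;> linarith
  rw [hunion, lintegral_union measurableSet_Ici (by
    intro s hs1 hs2 x hx
    have h1 := hs1 hx; have h2 := hs2 hx
    simp only [mem_Ioo] at h1
    simp only [mem_Ici] at h2
    exact absurd h2 (not_le.mpr h1.2))]
  have hzero : ∫⁻ t in Ici (1:ℝ), ENNReal.ofReal (1 - t ^ (1/c)) = 0 := by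
    rw [setLIntegral_congr_fun measurableSet_Ici
      (fun t (ht : t ∈ Ici (1:ℝ)) => ?_), lintegral_zero]
    rw [ENNReal.ofReal_eq_zero]
    have : (1:ℝ) ≤ t ^ (1/c) := Real.one_le_rpow ht (by positivity)
    linarith
  rw [hzero, add_zero]
  -- now compute the Ioo integral
  have hint : IntegrableOn (fun t : ℝ => 1 - t ^ (1/c)) (Ioo 0 1) := by
    apply Measure.integrableOn_of_bounded (M := 1) (by simp)
    · exact (by fun_prop : Measurable fun t : ℝ => 1 - t ^ (1/c)).aestronglyMeasurable
    · refine (ae_restrict_iff' measurableSet_Ioo).mpr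
        (Filter.Eventually.of_forall fun t (ht : t ∈ Ioo (0:ℝ) 1) => ?_)
      rw [Real.norm_eq_abs, abs_le]
      have h1 : 0 ≤ t ^ (1/c) := Real.rpow_nonneg ht.1.le _
      have h2 : t ^ (1/c) ≤ 1 := Real.rpow_le_one ht.1.le ht.2.le (by positivity)
      constructor <;> linarith
  rw [← ofReal_integral_eq_lintegral_ofReal hint
    ((ae_restrict_iff' measurableSet_Ioo).mpr
      (Filter.Eventually.of_forall fun t (ht : t ∈ Ioo (0:ℝ) 1) => by
        have h2 : t ^ (1/c) ≤ 1 := Real.rpow_le_one ht.1.le ht.2.le (by positivity)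
        show (0:ℝ) ≤ 1 - t ^ (1/c)
        linarith))]
  congr 1
  have hr0 : (0:ℝ) < 1/c := by positivity
  have hr : (-1:ℝ) < 1/c := by linarith
  rw [← integral_Ioc_eq_integral_Ioo, ← intervalIntegral.integral_of_le zero_le_one,
    intervalIntegral.integral_sub intervalIntegrable_const (intervalIntegral.intervalIntegrable_rpow' hr),
    integral_rpow (Or.inl hr)]
  simp only [intervalIntegral.integral_const, smul_eq_mul, mul_one, sub_zero,
    Real.one_rpow, Real.zero_rpow (by positivity : (0:ℝ) < 1/c + 1).ne']
  field_simp
  ring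

lemma lintegral_pi_prod : ∀ (m : ℕ) (μ : Fin m → Measure ℝ),
    (∀ i, IsProbabilityMeasure (μ i)) → ∀ (f : Fin m → ℝ → ℝ≥0∞), (∀ i, Measurable (f i)) →
    ∫⁻ x, ∏ i, f i (x i) ∂(Measure.pi μ) = ∏ i, ∫⁻ t, f i t ∂(μ i) := by
  intro m
  induction m with
  | zero =>
    intro μ hμ f hf
    haveI := fun i => hμ i
    simp [lintegral_const]
  | succ m ih =>
    intro μ hμ f hf
    haveI := fun i => hμ i
    have hmp := measurePreserving_piFinSuccAbove μ 0
    set e := MeasurableEquiv.piFinSuccAbove (fun _ : Fin (m+1) => ℝ) 0 with he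
    have hG : Measurable fun z : ℝ × (Fin m → ℝ) =>
        f 0 z.1 * ∏ i, f i.succ (z.2 i) := by
      apply Measurable.mul ((hf 0).comp measurable_fst)
      exact Finset.measurable_prod _ fun i _ =>
        ((hf i.succ).comp ((measurable_pi_apply i).comp measurable_snd))
    calc ∫⁻ x, ∏ i, f i (x i) ∂(Measure.pi μ)
        = ∫⁻ x, (fun z : ℝ × (Fin m → ℝ) => f 0 z.1 * ∏ i, f i.succ (z.2 i)) (e x)
            ∂(Measure.pi μ) := by
          apply lintegral_congr fun x => ?_
          simp only [he, MeasurableEquiv.piFinSuccAbove_apply, Fin.insertNthEquiv,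
            Fin.succAbove_zero]
          rw [Fin.prod_univ_succ]
          rfl
      _ = ∫⁻ z, f 0 z.1 * ∏ i, f i.succ (z.2 i)
            ∂((μ 0).prod (Measure.pi fun j => μ ((0:Fin (m+1)).succAbove j))) := by
          rw [← hmp.map_eq, lintegral_map hG e.measurable]
      _ = ∏ i, ∫⁻ t, f i t ∂(μ i) := by
          haveI : ∀ j : Fin m, IsProbabilityMeasure (μ ((0:Fin (m+1)).succAbove j)) :=
            fun j => hμ _
          have hprod_meas : Measurable fun y : Fin m → ℝ => ∏ i, f i.succ (y i) :=
            Finset.measurable_prod _ fun i _ => (hf i.succ).comp (measurable_pi_apply i)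
          rw [lintegral_prod _ hG.aemeasurable]
          have hx : ∀ x : ℝ, ∫⁻ y, f 0 x * ∏ i, f i.succ (y i)
                ∂(Measure.pi fun j => μ ((0:Fin (m+1)).succAbove j))
              = f 0 x * ∫⁻ y, ∏ i, f i.succ (y i)
                ∂(Measure.pi fun j => μ ((0:Fin (m+1)).succAbove j)) :=
            fun x => lintegral_const_mul _ hprod_meas
          simp_rw [hx]
          rw [lintegral_mul_const _ (hf 0),
            ih (fun j => μ ((0:Fin (m+1)).succAbove j)) (fun j => hμ _)
              (fun j => f j.succ) (fun j => hf j.succ)]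
          rw [Fin.prod_univ_succ]
          simp only [Fin.succAbove_zero]
          try ring


/-- Conditional capture computation underlying Eq. (10): if `X 0 = G` and
`X i.succ = Hᵢ` are mutually independent unit-rate exponential random variables
and `cᵢ ≥ 0`, then `P(G ≥ ∑ᵢ cᵢ Hᵢ) = ∏ᵢ 1/(1 + cᵢ)`. -/
theorem exp_geq_weighted_sum_exp
    {Ω : Type*} [MeasurableSpace Ω] (P : Measure Ω) [IsProbabilityMeasure P]
    (n : ℕ) (X : Fin (n + 1) → Ω → ℝ) (hXm : ∀ i, Measurable (X i))
    (hindep : iIndepFun X P)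
    (hexp : ∀ i, ∀ t : ℝ, 0 ≤ t → P {ω | t ≤ X i ω} = ENNReal.ofReal (Real.exp (-t)))
    (c : Fin n → ℝ) (hc : ∀ i, 0 ≤ c i) :
    (P {ω | ∑ i : Fin n, c i * X i.succ ω ≤ X 0 ω}).toReal
      = ∏ i : Fin n, 1 / (1 + c i) := by
  set μ : Fin (n+1) → Measure ℝ := fun i => P.map (X i) with hμdef
  haveI hPμ : ∀ i, IsProbabilityMeasure (μ i) :=
    fun i => Measure.isProbabilityMeasure_map (hXm i).aemeasurable
  have hsurv : ∀ i, ∀ t : ℝ, 0 ≤ t → μ i (Ici t) = ENNReal.ofReal (Real.exp (-t)) := by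
    intro i t ht
    rw [hμdef, Measure.map_apply (hXm i) measurableSet_Ici]
    exact hexp i t ht
  haveI : ∀ i, SigmaFinite (μ i) := fun i => inferInstance
  have hjoint : P.map (fun ω i => X i ω) = Measure.pi μ := by
    refine (Measure.pi_eq (μ := μ) fun s hs => ?_).symm
    rw [Measure.map_apply (measurable_pi_lambda _ hXm) (MeasurableSet.univ_pi hs)]
    have hpre : (fun ω i => X i ω) ⁻¹' (univ.pi s) = ⋂ i ∈ Finset.univ, X i ⁻¹' s i := by
      ext ω; simp [Set.mem_pi]
    rw [hpre, hindep.measure_inter_preimage_eq_mul Finset.univ (fun i _ => hs i)]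
    exact Finset.prod_congr rfl fun i _ => (Measure.map_apply (hXm i) (hs i)).symm
  set S : Set (ℝ × (Fin n → ℝ)) := {p | ∑ i, c i * p.2 i ≤ p.1} with hS
  have hSm : MeasurableSet S := by
    apply measurableSet_le
    · exact Finset.measurable_sum _ fun i _ =>
        measurable_const.mul ((measurable_pi_apply i).comp measurable_snd)
    · exact measurable_fst
  have hmp := measurePreserving_piFinSuccAbove μ 0
  set e := MeasurableEquiv.piFinSuccAbove (fun _ : Fin (n+1) => ℝ) 0 with he
  have hpre2 : (fun ω i => X i ω) ⁻¹' (⇑e ⁻¹' S)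
      = {ω | ∑ i, c i * X i.succ ω ≤ X 0 ω} := by
    ext ω
    simp [he, MeasurableEquiv.piFinSuccAbove_apply, Fin.insertNthEquiv,
      Fin.succAbove_zero, hS, Fin.tail]
  have step1 : P {ω | ∑ i, c i * X i.succ ω ≤ X 0 ω}
      = ((μ 0).prod (Measure.pi fun j => μ ((0:Fin (n+1)).succAbove j))) S := by
    rw [← hmp.measure_preimage hSm.nullMeasurableSet, ← hjoint,
      Measure.map_apply (measurable_pi_lambda _ hXm) (e.measurable hSm), hpre2]
  rw [step1, Measure.prod_apply_symm hSm]
  set ν := Measure.pi fun j => μ ((0:Fin (n+1)).succAbove j) with hν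
  haveI : ∀ j : Fin n, IsProbabilityMeasure (μ ((0:Fin (n+1)).succAbove j)) := fun j => hPμ _
  have hsec : ∀ y : Fin n → ℝ, (fun x => (x, y)) ⁻¹' S = Ici (∑ i, c i * y i) := by
    intro y; ext g; simp [hS, mem_Ici]
  have hae : ∀ᵐ y ∂ν, ∀ i, 0 ≤ y i := by
    rw [ae_all_iff]
    intro i
    have h1 : {y : Fin n → ℝ | ¬ 0 ≤ y i} = Function.eval i ⁻¹' (Iio 0) := by
      ext y; simp [not_le]
    show ν {y | ¬ 0 ≤ y i} = 0
    rw [h1, hν]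
    exact Measure.pi_eval_preimage_null
      (μ := fun j => μ ((0:Fin (n+1)).succAbove j)) (i := i)
      (surv_Iio_zero (hsurv ((0:Fin (n+1)).succAbove i)))
  have hmain : ∫⁻ y, (μ 0) ((fun x => (x, y)) ⁻¹' S) ∂ν
      = ∫⁻ y, ∏ i, ENNReal.ofReal (Real.exp (-(c i * y i))) ∂ν := by
    apply lintegral_congr_ae
    filter_upwards [hae] with y hy
    rw [hsec y, hsurv 0 _ (Finset.sum_nonneg fun i _ => mul_nonneg (hc i) (hy i))]
    rw [← Finset.sum_neg_distrib, Real.exp_sum]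
    exact ENNReal.ofReal_prod_of_nonneg fun i _ => (Real.exp_pos _).le
  rw [hmain, hν, lintegral_pi_prod n _ (fun j => hPμ _)
    (fun i t => ENNReal.ofReal (Real.exp (-(c i * t))))
    (fun i => (measurable_const.mul measurable_id).neg.exp.ennreal_ofReal)]
  have hcalc : ∀ i : Fin n, ∫⁻ t, ENNReal.ofReal (Real.exp (-(c i * t)))
      ∂(μ ((0:Fin (n+1)).succAbove i)) = ENNReal.ofReal (1 / (1 + c i)) :=
    fun i => surv_lintegral_exp (hsurv _) (hc i)
  rw [Finset.prod_congr rfl fun i _ => hcalc i, ENNReal.toReal_prod]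
  exact Finset.prod_congr rfl fun i _ =>
    ENNReal.toReal_ofReal (by have := hc i; positivity)
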